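/- Let G₀ be the semidirect product (ℤ³ ⊕ ℤ³) ⋊ SL(3,ℤ), where SL(3,ℤ) acts by A · (x,y) = (Ax, (Aᵀ)⁻¹y), and for α ∈ ℝ let Ω̃_α be the 2-cocycle on G₀ defined by Ω̃_α((v,A),(w,B)) = Ω_α(v, A · w). If for α, β ∈ ℝ the cocycles Ω̃_α and Ω̃_β on G₀ are cohomologous, i.e. there exists μ : G₀ → S¹ with Ω̃_α(g,h) = μ(g) μ(h) μ(gh)⁻¹ Ω̃_β(g,h) for all g, h ∈ G₀, then 2(α − β) is an integer. In particular, the cohomology classes of the cocycles Ω̃_α on (ℤ³ ⊕ ℤ³) ⋊ SL(3,ℤ), for α ranging over [0, 1/2), are pairwise distinct. -/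

import Mathlib

open Matrix

/-- The additive group `R³ ⊕ R³`. -/
abbrev VV (R : Type*) := (Fin 3 → R) × (Fin 3 → R)

/-- Transpose, as a map on `SL(3,R)`. -/
def transposeSL {R : Type*} [CommRing R] (A : Matrix.SpecialLinearGroup (Fin 3) R) :
    Matrix.SpecialLinearGroup (Fin 3) R :=
  ⟨A.val.transpose, by rw [Matrix.det_transpose]; exact A.prop⟩

/-- The group homomorphism `A ↦ (Aᵀ)⁻¹` on `SL(3,R)`. -/
def dualHom {R : Type*} [CommRing R] :
    Matrix.SpecialLinearGroup (Fin 3) R →* Matrix.SpecialLinearGroup (Fin 3) R where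
  toFun A := (transposeSL A)⁻¹
  map_one' := by
    simp [transposeSL]
    exact inv_one
  map_mul' A B := by
    show (transposeSL (A * B))⁻¹ = (transposeSL A)⁻¹ * (transposeSL B)⁻¹
    have h : transposeSL (A * B) = transposeSL B * transposeSL A :=
      Subtype.ext (by simp [transposeSL, Matrix.transpose_mul]; rfl)
    rw [h, _root_.mul_inv_rev]

/-- The (multiplicative) group structure on `AddAut A` by composition, as in the older Mathlib. -/
instance addAutGroupOld {A : Type*} [Add A] : Group (AddAut A) where
  mul g h := AddEquiv.trans h g
  one := AddEquiv.refl _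
  inv := AddEquiv.symm
  mul_assoc _ _ _ := rfl
  one_mul _ := rfl
  mul_one _ := rfl
  inv_mul_cancel := AddEquiv.self_trans_symm

/-- Linear automorphisms as additive automorphisms, as a group homomorphism. -/
def linToAddAut {R : Type*} [CommRing R] :
    ((Fin 3 → R) ≃ₗ[R] (Fin 3 → R)) →* AddAut (Fin 3 → R) where
  toFun e := e.toAddEquiv
  map_one' := rfl
  map_mul' _ _ := rfl

/-- Pairs of additive automorphisms give additive automorphisms of the product. -/
def addAutProd {R : Type*} [CommRing R] :
    AddAut (Fin 3 → R) × AddAut (Fin 3 → R) →* AddAut (VV R) where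
  toFun p := AddEquiv.prodCongr p.1 p.2
  map_one' := rfl
  map_mul' _ _ := rfl

/-- The action of `SL(3,R)` on `R³ ⊕ R³` given by `A · (x,y) = (Ax, (Aᵀ)⁻¹y)`,
as a homomorphism into additive automorphisms. -/
noncomputable def sl3Act {R : Type*} [CommRing R] :
    Matrix.SpecialLinearGroup (Fin 3) R →* AddAut (VV R) :=
  addAutProd.comp
    (((linToAddAut.comp Matrix.SpecialLinearGroup.toLin')).prod
      ((linToAddAut.comp Matrix.SpecialLinearGroup.toLin').comp dualHom))

/-- Additive automorphisms as multiplicative automorphisms of `Multiplicative`. -/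
def addAutToMulAut {A : Type*} [AddGroup A] : AddAut A →* MulAut (Multiplicative A) where
  toFun e := AddEquiv.toMultiplicative e
  map_one' := rfl
  map_mul' _ _ := rfl

/-- The action of `SL(3,R)` on `Multiplicative (R³ ⊕ R³)`. -/
noncomputable def sl3ActM (R : Type*) [CommRing R] :
    Matrix.SpecialLinearGroup (Fin 3) R →* MulAut (Multiplicative (VV R)) :=
  addAutToMulAut.comp sl3Act

/-- The group `Γ_R = (R³ ⊕ R³) ⋊ SL(3,R)`. -/
abbrev GammaR (R : Type*) [CommRing R] :=
  SemidirectProduct (Multiplicative (VV R)) (Matrix.SpecialLinearGroup (Fin 3) R) (sl3ActM R)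

/-- Coordinatewise integer casting `ℤ³ → ℚ³` as an additive homomorphism. -/
def intCast3 : (Fin 3 → ℤ) →+ (Fin 3 → ℚ) := (Int.castAddHom ℚ).compLeft (Fin 3)

/-- The inclusion `ℤ³ ⊕ ℤ³ → ℚ³ ⊕ ℚ³`. -/
def intVec : VV ℤ →+ VV ℚ := intCast3.prodMap intCast3

/-- The subgroup `Λ = ℤ³ ⊕ ℤ³` of `Γ = (ℚ³ ⊕ ℚ³) ⋊ SL(3,ℚ)`. -/
noncomputable def LambdaSub : Subgroup (GammaR ℚ) :=
  (AddSubgroup.toSubgroup intVec.range).map SemidirectProduct.inl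

/-- The dot product on `R³`. -/
def dotR {R : Type*} [CommRing R] (x y : Fin 3 → R) : R := ∑ i, x i * y i

/-- The 2-cocycle `Ω_α` on `ℚ³ ⊕ ℚ³`. -/
noncomputable def OmegaQ (α : ℝ) (g h : VV ℚ) : Circle :=
  Circle.exp (2 * Real.pi * α * ((dotR g.1 h.2 - dotR g.2 h.1 : ℚ) : ℝ))

/-- The extension `Ω̃_α` of `Ω_α` to `Γ = (ℚ³ ⊕ ℚ³) ⋊ SL(3,ℚ)`. -/
noncomputable def OmegaT (α : ℝ) (g h : GammaR ℚ) : Circle :=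
  OmegaQ α (Multiplicative.toAdd g.left) (sl3Act g.right (Multiplicative.toAdd h.left))

/-- The 2-cocycle `Ω̃_α((v,A),(w,B)) = Ω_α(v, A·w)` on `G₀ = (ℤ³ ⊕ ℤ³) ⋊ SL(3,ℤ)`. -/
noncomputable def OmegaTZ (α : ℝ) (g h : GammaR ℤ) : Circle :=
  OmegaQ α (intVec (Multiplicative.toAdd g.left))
    (intVec (sl3Act g.right (Multiplicative.toAdd h.left)))


/-!
Coboundaries are symmetric on commuting pairs: if `gh = hg` then `μ g μ h μ(gh)⁻¹` does not change
when `g` and `h` are swapped, so `Ω(g,h) / Ω(h,g)` is an invariant of the cohomology class of `Ω`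
on commuting pairs. The translations by `(e₁, 0)` and `(0, e₁)` commute in `G₀`, and on them
`Ω̃_α` takes the values `e^{2πiα}` and `e^{-2πiα}`, so the invariant is `e^{2πi·2α}`. Cohomologous
`Ω̃_α`, `Ω̃_β` therefore have `e^{2πi·2α} = e^{2πi·2β}`, i.e. `2(α - β) ∈ ℤ`.
-/

open Real SemidirectProduct

section Cohomologous

variable {G M : Type*} [Mul G] [CommGroup M]

def Cohomologous (Ω Ω' : G → G → M) : Prop :=
  ∃ μ : G → M, ∀ g h, Ω g h = μ g * μ h * (μ (g * h))⁻¹ * Ω' g h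

theorem Cohomologous.div_swap_eq {Ω Ω' : G → G → M} (hΩ : Cohomologous Ω Ω') {g h : G}
    (hgh : Commute g h) : Ω g h / Ω h g = Ω' g h / Ω' h g := by
  obtain ⟨μ, hμ⟩ := hΩ
  rw [hμ g h, hμ h g, hgh.eq, mul_comm (μ h) (μ g)]
  exact mul_div_mul_left_eq_div _ _ _

end Cohomologous

theorem OmegaTZ_inl_inl (α : ℝ) (v w : VV ℤ) :
    OmegaTZ α (inl (.ofAdd v)) (inl (.ofAdd w)) =
      Circle.exp (2 * π * α * (dotR v.1 w.2 - dotR v.2 w.1 : ℤ)) := by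
  simp only [OmegaTZ, OmegaQ, dotR, intVec, intCast3, left_inl, right_inl, toAdd_ofAdd,
    AddMonoidHom.coe_prodMap, Prod.map_fst, Prod.map_snd, AddMonoidHom.compLeft_apply,
    Int.coe_castAddHom, Function.comp_apply, map_one]
  push_cast
  -- `sl3Act 1 w = w` holds for the `addAutGroupOld` unit only definitionally
  rfl

theorem commute_inl_inl (v w : VV ℤ) :
    Commute (inl (.ofAdd v) : GammaR ℤ) (inl (.ofAdd w)) :=
  (Commute.all _ _).map inl

theorem OmegaTZ_div_swap_e₁ (α : ℝ) :
    OmegaTZ α (inl (.ofAdd (Pi.single 0 1, 0))) (inl (.ofAdd (0, Pi.single 0 1))) /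
        OmegaTZ α (inl (.ofAdd (0, Pi.single 0 1))) (inl (.ofAdd (Pi.single 0 1, 0))) =
      Circle.exp (2 * π * (2 * α)) := by
  rw [OmegaTZ_inl_inl, OmegaTZ_inl_inl, ← Circle.exp_sub]
  congr 1
  simp only [dotR, Pi.single_apply, mul_ite, mul_one, mul_zero, Finset.sum_ite_eq',
    Finset.mem_univ, if_true, Pi.zero_apply, Finset.sum_const_zero]
  push_cast
  ring

theorem exists_int_two_mul_sub_eq_of_cohomologous {α β : ℝ}
    (h : Cohomologous (OmegaTZ α) (OmegaTZ β)) : ∃ n : ℤ, 2 * (α - β) = n := by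
  have hexp := h.div_swap_eq (commute_inl_inl (Pi.single 0 1, 0) (0, Pi.single 0 1))
  rw [OmegaTZ_div_swap_e₁, OmegaTZ_div_swap_e₁] at hexp
  obtain ⟨n, hn⟩ := Circle.exp_eq_exp.mp hexp
  exact ⟨n, mul_left_cancel₀ two_pi_pos.ne' (by linear_combination hn)⟩

theorem eq_of_cohomologous_of_mem_Ico {α β : ℝ} (hα : α ∈ Set.Ico (0 : ℝ) (1 / 2))
    (hβ : β ∈ Set.Ico (0 : ℝ) (1 / 2)) (h : Cohomologous (OmegaTZ α) (OmegaTZ β)) : α = β := by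
  obtain ⟨n, hn⟩ := exists_int_two_mul_sub_eq_of_cohomologous h
  have hn_abs : |(n : ℝ)| < 1 := by
    rw [← hn, abs_lt]
    constructor <;> linarith [hα.1, hα.2, hβ.1, hβ.2]
  have hn_zero : n = 0 := Int.abs_lt_one_iff.mp (by exact_mod_cast hn_abs)
  rw [hn_zero, Int.cast_zero] at hn
  linarith

/-- If the 2-cocycles `Ω̃_α` and `Ω̃_β` on `G₀ = (ℤ³ ⊕ ℤ³) ⋊ SL(3,ℤ)` are
cohomologous then `2(α − β) ∈ ℤ`; in particular the cohomology classes of the `Ω̃_α`,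
`α ∈ [0, 1/2)`, are pairwise distinct. -/
theorem OmegaTZ_cohomologous_iff :
    (∀ α β : ℝ,
      (∃ μ : GammaR ℤ → Circle, ∀ g h : GammaR ℤ,
        OmegaTZ α g h = μ g * μ h * (μ (g * h))⁻¹ * OmegaTZ β g h) →
      ∃ n : ℤ, 2 * (α - β) = (n : ℝ)) ∧
    (∀ α β : ℝ, α ∈ Set.Ico (0 : ℝ) (1 / 2) → β ∈ Set.Ico (0 : ℝ) (1 / 2) → α ≠ β →
      ¬ ∃ μ : GammaR ℤ → Circle, ∀ g h : GammaR ℤ,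
        OmegaTZ α g h = μ g * μ h * (μ (g * h))⁻¹ * OmegaTZ β g h) :=
  ⟨fun _ _ h ↦ exists_int_two_mul_sub_eq_of_cohomologous h,
    fun _ _ hα hβ hne h ↦ hne (eq_of_cohomologous_of_mem_Ico hα hβ h)⟩
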